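/- Let D be a symmetric matrix with Tr(D) = 0 and D_cmds the EDM returned by classical MDS in dimension r. Then (ξ(D) - ξ(D_cmds))^2 = (Σ_i λ̄_i)^2, where λ̄_i are the discarded eigenvalues of D̂ (those with λ_i > 0 or index > r in increasing order) and ξ(·) denotes the (n,n) entry after conjugation by the Householder reflector Q. -/

import Mathlib

/-!
`Q` is the Householder reflector exchanging the all-ones vector `1` with `-√(n+1) eₙ`; being a
symmetric involution it also sends `eₙ` to `-1/√(n+1) · 1`, so `ξ(M) = (Q M Q)ₙₙ = 1ᵀ M 1 / (n+1)`
for every `M`. Since `tr (Q D Q) = tr D = 0`, `ξ(D) = -tr D̂ = -∑ λᵢ`. On the other hand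
`D_cmds = κ(Y)` with `κ(Y)ᵢⱼ = Yᵢᵢ + Yⱼⱼ - 2 Yᵢⱼ` and `Y = S diag(μ) Sᵀ`, and
`1ᵀ κ(Y) 1 = 2 ((n+1) tr Y - 1ᵀ Y 1)`. The matrix `S` is orthogonal, so `tr Y = ∑ μᵢ`, and `Sᵀ 1` is
a multiple of `eₙ`, where `μ` vanishes, so `1ᵀ Y 1 = 0`. Hence `ξ(D_cmds) = 2 ∑ μᵢ`, and the
difference is `-∑ (λᵢ + 2 μᵢ) = -∑ λ̄ᵢ`.
-/

open Matrix

lemma sqrt_card_pos {ι : Type*} [Fintype ι] (k : ι) : 0 < √(Fintype.card ι : ℝ) :=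
  Real.sqrt_pos.2 (by exact_mod_cast Fintype.card_pos_iff.2 ⟨k⟩)

namespace Matrix

section

variable {m ι R : Type*} [Fintype m] [Fintype ι] [DecidableEq ι] [CommSemiring R]

lemma trace_mul_diagonal_mul_transpose {S : Matrix m ι R} (hS : Sᵀ * S = 1) (μ : ι → R) :
    trace (S * diagonal μ * Sᵀ) = ∑ i, μ i := by
  rw [trace_mul_cycle, hS, one_mul, trace_diagonal]

lemma dotProduct_mul_diagonal_mul_transpose_mulVec (S : Matrix m ι R) (μ : ι → R) (w : m → R) :
    w ⬝ᵥ (S * diagonal μ * Sᵀ) *ᵥ w = ∑ i, μ i * (w ᵥ* S) i ^ 2 := by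
  rw [← mulVec_mulVec, ← mulVec_mulVec, dotProduct_mulVec, mulVec_transpose, dotProduct_mulVec,
    dotProduct]
  exact Finset.sum_congr rfl fun i _ => by rw [vecMul_diagonal]; ring

end

lemma trace_eq_trace_submatrix_castSucc_add_last {n : ℕ} {R : Type*} [AddCommMonoid R]
    (M : Matrix (Fin (n + 1)) (Fin (n + 1)) R) :
    trace M = trace (M.submatrix Fin.castSucc Fin.castSucc) + M (Fin.last n) (Fin.last n) :=
  Fin.sum_univ_castSucc _

section Householder

variable {ι : Type*} [Fintype ι] [DecidableEq ι]

noncomputable def householder (v : ι → ℝ) : Matrix ι ι ℝ := 1 - (2 / (v ⬝ᵥ v)) • vecMulVec v v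

lemma householder_transpose (v : ι → ℝ) : (householder v)ᵀ = householder v := by
  simp [householder, transpose_vecMulVec]

lemma householder_mulVec (v w : ι → ℝ) :
    householder v *ᵥ w = w - (2 / (v ⬝ᵥ v) * (v ⬝ᵥ w)) • v := by
  simp [householder, sub_mulVec, smul_mulVec, vecMulVec_mulVec, smul_smul]

lemma householder_mul_self {v : ι → ℝ} (hv : v ≠ 0) : householder v * householder v = 1 := by
  have hvv : v ⬝ᵥ v ≠ 0 := by simpa using hv
  have hc : 2 / (v ⬝ᵥ v) * (2 / (v ⬝ᵥ v)) * (v ⬝ᵥ v) = 2 / (v ⬝ᵥ v) + 2 / (v ⬝ᵥ v) := by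
    field_simp; ring
  rw [householder, sub_mul, one_mul, mul_sub, mul_one, smul_mul_smul_comm, vecMulVec_mul_vecMulVec,
    vecMulVec_smul, smul_smul, hc, add_smul]
  abel

end Householder

section OnesReflector

variable {ι : Type*} [Fintype ι] [DecidableEq ι]

noncomputable def onesReflector (k : ι) : Matrix ι ι ℝ :=
  householder (1 + √(Fintype.card ι) • Pi.single k 1)

lemma onesReflector_transpose (k : ι) : (onesReflector k)ᵀ = onesReflector k :=
  householder_transpose _

lemma onesReflector_mulVec_one (k : ι) :
    onesReflector k *ᵥ 1 = -√(Fintype.card ι : ℝ) • Pi.single k 1 := by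
  set α := √(Fintype.card ι : ℝ)
  have hα : 0 < α := sqrt_card_pos k
  have hα2 : α ^ 2 = Fintype.card ι := Real.sq_sqrt (Nat.cast_nonneg _)
  have h1 : (1 + α • Pi.single k 1) ⬝ᵥ (1 : ι → ℝ) = α ^ 2 + α := by
    simp [add_dotProduct, smul_dotProduct, hα2]
  have h2 : (1 + α • Pi.single k 1) ⬝ᵥ (1 + α • Pi.single k 1) = 2 * (α ^ 2 + α) := by
    simp only [dotProduct_add, add_dotProduct, one_dotProduct_one, smul_dotProduct,
      single_dotProduct, Pi.one_apply, mul_one, smul_eq_mul, dotProduct_smul, dotProduct_single,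
      Pi.add_apply, Pi.smul_apply, Pi.single_eq_same]
    linarith
  have hc : 2 / (2 * (α ^ 2 + α)) * (α ^ 2 + α) = 1 := by field_simp
  rw [onesReflector, householder_mulVec, h1, h2, hc, one_smul, sub_add_cancel_left, neg_smul]

lemma onesReflector_mul_self (k : ι) : onesReflector k * onesReflector k = 1 := by
  refine householder_mul_self fun h => ?_
  have := congrFun h k
  simp only [Pi.add_apply, Pi.one_apply, Pi.smul_apply, Pi.single_eq_same, smul_eq_mul, mul_one,
    Pi.zero_apply] at this
  linarith [sqrt_card_pos k]

lemma onesReflector_mulVec_single (k : ι) :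
    onesReflector k *ᵥ Pi.single k 1 = -(√(Fintype.card ι : ℝ))⁻¹ • 1 := by
  have hα := (sqrt_card_pos k).ne'
  have := congrArg (onesReflector k *ᵥ ·) (onesReflector_mulVec_one k)
  simp only [mulVec_mulVec, onesReflector_mul_self, one_mulVec, mulVec_smul] at this
  rw [this, smul_smul, neg_mul_neg, inv_mul_cancel₀ hα, one_smul]

lemma onesReflector_mul_mul_apply_self (k : ι) (M : Matrix ι ι ℝ) :
    (onesReflector k * M * onesReflector k) k k = (1 ⬝ᵥ M *ᵥ 1) / Fintype.card ι := by
  have hrow : onesReflector k k = -(√(Fintype.card ι : ℝ))⁻¹ • 1 := by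
    rw [← onesReflector_mulVec_single, ← onesReflector_transpose, mulVec_transpose,
      single_one_vecMul, onesReflector_transpose]
    rfl
  have hα2 : √(Fintype.card ι : ℝ) ^ 2 = Fintype.card ι := Real.sq_sqrt (Nat.cast_nonneg _)
  rw [mul_mul_apply, onesReflector_transpose, hrow, mulVec_smul, smul_dotProduct, dotProduct_smul,
    smul_eq_mul, smul_eq_mul, ← mul_assoc, neg_mul_neg, ← mul_inv, ← sq, hα2, inv_mul_eq_div]

end OnesReflector

def edmOfGram {ι R : Type*} [Ring R] (Y : Matrix ι ι R) : Matrix ι ι R :=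
  of fun i j => Y i i + Y j j - 2 * Y i j

lemma one_dotProduct_edmOfGram_mulVec_one {ι R : Type*} [Fintype ι] [CommRing R]
    (Y : Matrix ι ι R) :
    1 ⬝ᵥ edmOfGram Y *ᵥ 1 = 2 * (Fintype.card ι * trace Y - 1 ⬝ᵥ Y *ᵥ 1) := by
  simp only [mulVec, dotProduct, Pi.one_apply, mul_one]
  simp only [edmOfGram, of_apply, Finset.sum_sub_distrib, Finset.sum_add_distrib, Finset.sum_const,
    Finset.card_univ, nsmul_eq_mul, ← Finset.mul_sum, one_mul, trace, diag_apply]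
  ring

section ExtendLast

variable {n : ℕ} {R : Type*} [Semiring R]

/-- The block-diagonal matrix `diag(A, 1)`. -/
def extendLast (A : Matrix (Fin n) (Fin n) R) : Matrix (Fin (n + 1)) (Fin (n + 1)) R :=
  of fun i j =>
    Fin.lastCases (Fin.lastCases (1 : R) (fun _ => (0 : R)) j)
      (fun i' => Fin.lastCases (0 : R) (fun j' => A i' j') j) i

@[simp] lemma extendLast_last_last (A : Matrix (Fin n) (Fin n) R) :
    extendLast A (Fin.last n) (Fin.last n) = 1 := by simp [extendLast]
@[simp] lemma extendLast_last_castSucc (A : Matrix (Fin n) (Fin n) R) (j : Fin n) :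
    extendLast A (Fin.last n) j.castSucc = 0 := by simp [extendLast]
@[simp] lemma extendLast_castSucc_last (A : Matrix (Fin n) (Fin n) R) (i : Fin n) :
    extendLast A i.castSucc (Fin.last n) = 0 := by simp [extendLast]
@[simp] lemma extendLast_castSucc_castSucc (A : Matrix (Fin n) (Fin n) R) (i j : Fin n) :
    extendLast A i.castSucc j.castSucc = A i j := by simp [extendLast]

lemma extendLast_transpose (A : Matrix (Fin n) (Fin n) R) : (extendLast A)ᵀ = extendLast Aᵀ := by
  ext i j
  induction i using Fin.lastCases <;> induction j using Fin.lastCases <;> simp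

lemma extendLast_mul (A B : Matrix (Fin n) (Fin n) R) :
    extendLast A * extendLast B = extendLast (A * B) := by
  ext i j
  induction i using Fin.lastCases <;> induction j using Fin.lastCases <;>
    simp [mul_apply, Fin.sum_univ_castSucc]

lemma extendLast_one : extendLast (1 : Matrix (Fin n) (Fin n) R) = 1 := by
  ext i j
  induction i using Fin.lastCases <;> induction j using Fin.lastCases <;>
    simp [one_apply, Fin.castSucc_ne_last, (Fin.castSucc_ne_last _).symm]

lemma single_last_vecMul_extendLast (A : Matrix (Fin n) (Fin n) R) :
    Pi.single (Fin.last n) 1 ᵥ* extendLast A = Pi.single (Fin.last n) 1 := by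
  ext j
  induction j using Fin.lastCases <;> simp [Fin.castSucc_ne_last]

end ExtendLast

lemma onesReflector_mul_edmOfGram_mul_apply_self {ι : Type*} [Fintype ι] [DecidableEq ι] {k : ι}
    {S : Matrix ι ι ℝ} {μ : ι → ℝ} {c : ℝ} (hS : Sᵀ * S = 1) (hSone : 1 ᵥ* S = c • Pi.single k 1)
    (hμ : μ k = 0) :
    (onesReflector k * edmOfGram (S * diagonal μ * Sᵀ) * onesReflector k) k k = 2 * ∑ i, μ i := by
  have hY : ∑ i, μ i * (1 ᵥ* S) i ^ 2 = 0 :=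
    Finset.sum_eq_zero fun i _ => by by_cases hi : i = k <;> simp [hSone, hi, hμ]
  have hcard : (Fintype.card ι : ℝ) ≠ 0 := Nat.cast_ne_zero.2 (Fintype.card_pos_iff.2 ⟨k⟩).ne'
  rw [onesReflector_mul_mul_apply_self, one_dotProduct_edmOfGram_mulVec_one,
    trace_mul_diagonal_mul_transpose hS, dotProduct_mul_diagonal_mul_transpose_mulVec, hY]
  field_simp
  ring

end Matrix

theorem cmds_xi_diff_sq_general (n r : ℕ) (D : Matrix (Fin (n + 1)) (Fin (n + 1)) ℝ)
    (htrace : D.trace = 0) :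
    let v : Fin (n + 1) → ℝ := fun i => if i = Fin.last n then 1 + Real.sqrt (n + 1) else 1
    let Q : Matrix (Fin (n + 1)) (Fin (n + 1)) ℝ := 1 - (2 / (v ⬝ᵥ v)) • vecMulVec v v
    let Dhat : Matrix (Fin n) (Fin n) ℝ :=
      Matrix.of fun i j => (Q * D * Q) i.castSucc j.castSucc
    ∀ (U : Matrix (Fin n) (Fin n) ℝ) (l : Fin n → ℝ),
      Uᵀ * U = 1 → (∀ i j : Fin n, i ≤ j → l i ≤ l j) →
      Dhat = U * Matrix.diagonal l * Uᵀ →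
      let Ub : Matrix (Fin (n + 1)) (Fin (n + 1)) ℝ :=
        Matrix.of fun i j =>
          Fin.lastCases (Fin.lastCases (1 : ℝ) (fun _ => (0 : ℝ)) j)
            (fun i' => Fin.lastCases (0 : ℝ) (fun j' => U i' j') j) i
      let S : Matrix (Fin (n + 1)) (Fin (n + 1)) ℝ := Q * Ub
      let lamBar : Fin (n + 1) → ℝ := fun i =>
        Fin.lastCases (0 : ℝ)
          (fun i' => if l i' > 0 ∨ r < (i' : ℕ) + 1 then l i' else 0) i
      let mu : Fin (n + 1) → ℝ := fun i =>
        Fin.lastCases (0 : ℝ)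
          (fun i' => if l i' > 0 ∨ r < (i' : ℕ) + 1 then 0 else -(l i') / 2) i
      let Y : Matrix (Fin (n + 1)) (Fin (n + 1)) ℝ := S * Matrix.diagonal mu * Sᵀ
      let Dcmds : Matrix (Fin (n + 1)) (Fin (n + 1)) ℝ :=
        Matrix.of fun i j => Y i i + Y j j - 2 * Y i j
      let C1 : ℝ := ∑ i, (lamBar i) ^ 2
      let C2 : ℝ := -∑ i, lamBar i
      ((Q * D * Q) (Fin.last n) (Fin.last n) -
          (Q * Dcmds * Q) (Fin.last n) (Fin.last n)) ^ 2 = C2 ^ 2 := by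
  intro v Q Dhat U l hU _ hDhat Ub S lamBar mu Y Dcmds _ C2
  have hQ : Q = onesReflector (Fin.last n) := by
    have hv : v = 1 + √(Fintype.card (Fin (n + 1)) : ℝ) • Pi.single (Fin.last n) 1 := by
      ext i; by_cases hi : i = Fin.last n <;> simp [v, hi]
    rw [onesReflector, householder, ← hv]
  have hUb : Ub = extendLast U := rfl
  have hξD : (Q * D * Q) (Fin.last n) (Fin.last n) = -∑ i, l i := by
    have h := trace_eq_trace_submatrix_castSucc_add_last (Q * D * Q)
    rw [trace_mul_cycle, hQ, onesReflector_mul_self, one_mul, htrace, ← hQ,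
      show (Q * D * Q).submatrix Fin.castSucc Fin.castSucc = Dhat from rfl, hDhat,
      trace_mul_diagonal_mul_transpose hU] at h
    linarith
  have hS : Sᵀ * S = 1 := by
    rw [transpose_mul, Matrix.mul_assoc, ← Matrix.mul_assoc Qᵀ, hQ, onesReflector_transpose,
      onesReflector_mul_self, one_mul, hUb, extendLast_transpose, extendLast_mul, hU, extendLast_one]
  have hSone : 1 ᵥ* S = -√(Fintype.card (Fin (n + 1)) : ℝ) • Pi.single (Fin.last n) 1 := by
    rw [← vecMul_vecMul, ← mulVec_transpose Q, hQ, onesReflector_transpose, onesReflector_mulVec_one,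
      smul_vecMul, hUb, single_last_vecMul_extendLast]
  have hξDcmds : (Q * Dcmds * Q) (Fin.last n) (Fin.last n) = 2 * ∑ i, mu i := by
    rw [hQ]
    exact onesReflector_mul_edmOfGram_mul_apply_self hS hSone (by simp [mu])
  have hsplit : ∀ i : Fin n, (if l i > 0 ∨ r < (i : ℕ) + 1 then l i else 0) =
      l i + 2 * (if l i > 0 ∨ r < (i : ℕ) + 1 then 0 else -(l i) / 2) := fun i => by
    split_ifs <;> ring
  rw [hξD, hξDcmds]
  simp only [C2, lamBar, mu, Fin.sum_univ_castSucc, Fin.lastCases_castSucc, Fin.lastCases_last,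
    add_zero, hsplit, Finset.sum_add_distrib, Finset.mul_sum]
  ring

theorem cmds_xi_diff_sq (n r : ℕ) (D : Matrix (Fin (n + 1)) (Fin (n + 1)) ℝ)
    (hsymm : D.IsSymm) (htrace : D.trace = 0) :
    let v : Fin (n + 1) → ℝ := fun i => if i = Fin.last n then 1 + Real.sqrt (n + 1) else 1
    let Q : Matrix (Fin (n + 1)) (Fin (n + 1)) ℝ := 1 - (2 / (v ⬝ᵥ v)) • vecMulVec v v
    let Dhat : Matrix (Fin n) (Fin n) ℝ :=
      Matrix.of fun i j => (Q * D * Q) i.castSucc j.castSucc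
    ∀ (U : Matrix (Fin n) (Fin n) ℝ) (l : Fin n → ℝ),
      Uᵀ * U = 1 → (∀ i j : Fin n, i ≤ j → l i ≤ l j) →
      Dhat = U * Matrix.diagonal l * Uᵀ →
      let Ub : Matrix (Fin (n + 1)) (Fin (n + 1)) ℝ :=
        Matrix.of fun i j =>
          Fin.lastCases (Fin.lastCases (1 : ℝ) (fun _ => (0 : ℝ)) j)
            (fun i' => Fin.lastCases (0 : ℝ) (fun j' => U i' j') j) i
      let S : Matrix (Fin (n + 1)) (Fin (n + 1)) ℝ := Q * Ub
      let lamBar : Fin (n + 1) → ℝ := fun i =>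
        Fin.lastCases (0 : ℝ)
          (fun i' => if l i' > 0 ∨ r < (i' : ℕ) + 1 then l i' else 0) i
      let mu : Fin (n + 1) → ℝ := fun i =>
        Fin.lastCases (0 : ℝ)
          (fun i' => if l i' > 0 ∨ r < (i' : ℕ) + 1 then 0 else -(l i') / 2) i
      let Y : Matrix (Fin (n + 1)) (Fin (n + 1)) ℝ := S * Matrix.diagonal mu * Sᵀ
      let Dcmds : Matrix (Fin (n + 1)) (Fin (n + 1)) ℝ :=
        Matrix.of fun i j => Y i i + Y j j - 2 * Y i j
      let C1 : ℝ := ∑ i, (lamBar i) ^ 2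
      let C2 : ℝ := -∑ i, lamBar i
      ((Q * D * Q) (Fin.last n) (Fin.last n) -
          (Q * Dcmds * Q) (Fin.last n) (Fin.last n)) ^ 2 = C2 ^ 2 :=
  cmds_xi_diff_sq_general n r D htrace
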